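/- With the setup of the preceding statement, there exists a closed set Z ⊆ ℝ^M of Lebesgue measure zero such that for any function h : ℝ → [-1,1], if the vector (h(γ₁),…,h(γ_M)) ∉ Z, then the N×N real matrix X with entries X_{ij} = h(γ_{m(i,j)}) is invertible. -/

import Mathlib

open MeasureTheory

/-- The zero set of a nonzero multivariate real polynomial has Lebesgue measure zero. -/
theorem mvpoly_zero_set_volume_zero :
    ∀ (n : ℕ) (p : MvPolynomial (Fin n) ℝ), p ≠ 0 →
      volume {x : Fin n → ℝ | MvPolynomial.eval x p = 0} = 0 := by
  intro n
  induction n with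
  | zero =>
    intro p hp
    convert measure_empty (μ := (volume : Measure (Fin 0 → ℝ)))
    ext x
    simp only [Set.mem_setOf_eq, Set.mem_empty_iff_false, iff_false]
    have hx : x = (isEmptyElim : Fin 0 → ℝ) := funext fun i => i.elim0
    have : MvPolynomial.eval x p = (MvPolynomial.isEmptyRingEquiv ℝ (Fin 0)) p := by
      rw [hx]; conv_lhs => rw [← (MvPolynomial.isEmptyRingEquiv ℝ (Fin 0)).symm_apply_apply p]
      rw [MvPolynomial.isEmptyRingEquiv_symm_apply, MvPolynomial.eval_C]
    rw [this]
    exact fun h => hp ((MvPolynomial.isEmptyRingEquiv ℝ (Fin 0)).map_eq_zero_iff.mp h)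
  | succ n ih =>
    intro p hp
    -- view p as a univariate polynomial over MvPolynomial (Fin n) ℝ
    set q : Polynomial (MvPolynomial (Fin n) ℝ) := MvPolynomial.finSuccEquiv ℝ n p with hq
    have hq0 : q ≠ 0 := by
      intro h
      apply hp
      have := congrArg (MvPolynomial.finSuccEquiv ℝ n).symm (hq ▸ h)
      simpa using this
    set S : Set (Fin (n + 1) → ℝ) := {x | MvPolynomial.eval x p = 0} with hS
    have hScl : IsClosed S := by
      exact isClosed_eq (MvPolynomial.continuous_eval p) continuous_const
    -- transfer to ((Fin n → ℝ) × ℝ)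
    have e := (MeasureTheory.volume_preserving_piFinSuccAbove (fun _ : Fin (n + 1) => ℝ) 0).symm
    have hswap := MeasureTheory.Measure.measurePreserving_swap
      (μ := (volume : Measure (Fin n → ℝ))) (ν := (volume : Measure ℝ))
    have hvolswap : ((volume : Measure (Fin n → ℝ)).prod (volume : Measure ℝ))
        = volume := (Measure.volume_eq_prod _ _).symm
    set g : (Fin n → ℝ) × ℝ → (Fin (n + 1) → ℝ) :=
      fun sy => Fin.cons sy.2 sy.1 with hg
    have hgmp : MeasurePreserving g
        ((volume : Measure (Fin n → ℝ)).prod (volume : Measure ℝ)) volume := by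
      have hcomp := e.comp hswap
      have : g = (MeasurableEquiv.piFinSuccAbove (fun _ : Fin (n + 1) => ℝ) 0).symm ∘
          Prod.swap := by
        funext sy
        simp only [Function.comp_apply, Prod.swap, hg]
        rw [MeasurableEquiv.piFinSuccAbove_symm_apply]
        simp [Fin.insertNthEquiv, Fin.insertNth_zero']
      rw [this]
      exact hcomp
    have key : volume (g ⁻¹' S) = 0 → volume S = 0 := by
      intro h0
      have h2 := hgmp.measure_preimage hScl.measurableSet.nullMeasurableSet
      rw [← h2, hvolswap]
      exact h0
    refine key ?_
    -- now use Fubini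
    have hTmeas : MeasurableSet (g ⁻¹' S) :=
      hScl.measurableSet.preimage hgmp.measurable
    rw [← hvolswap, MeasureTheory.Measure.measure_prod_null hTmeas]
    -- nonzero coefficient of q
    obtain ⟨k, hk⟩ : ∃ k, q.coeff k ≠ 0 := by
      by_contra hc
      push_neg at hc
      exact hq0 (Polynomial.ext fun k => hc k)
    have hnull : volume {s : Fin n → ℝ | MvPolynomial.eval s (q.coeff k) = 0} = 0 :=
      ih (q.coeff k) hk
    have hmem : {s : Fin n → ℝ | MvPolynomial.eval s (q.coeff k) ≠ 0} ∈ ae volume := by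
      rw [mem_ae_iff]
      rw [show {s : Fin n → ℝ | MvPolynomial.eval s (q.coeff k) ≠ 0}ᶜ
          = {s : Fin n → ℝ | MvPolynomial.eval s (q.coeff k) = 0} by
        ext s; simp]
      exact hnull
    refine Filter.eventuallyEq_of_mem hmem ?_
    · intro s hs
      simp only [Set.mem_setOf_eq] at hs
      have hmapne : Polynomial.map (MvPolynomial.eval s) q ≠ 0 := by
        intro h
        apply hs
        have := congrArg (fun r => Polynomial.coeff r k) h
        simpa [Polynomial.coeff_map] using this
      have hsec : Prod.mk s ⁻¹' (g ⁻¹' S)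
          = {y : ℝ | Polynomial.eval y (Polynomial.map (MvPolynomial.eval s) q) = 0} := by
        ext y
        simp only [Set.mem_preimage, Set.mem_setOf_eq, hS, hg]
        rw [MvPolynomial.eval_eq_eval_mv_eval']
      have hfin : (Prod.mk s ⁻¹' (g ⁻¹' S)).Finite := by
        rw [hsec]
        exact Polynomial.finite_setOf_isRoot hmapne
      simpa using hfin.measure_zero volume

theorem exists_null_set_outside_which_matrix_invertible
    (N M : ℕ) (hN : 1 ≤ N) (γ : Fin M → ℝ) (hγ : Function.Injective γ)
    (m : Fin N × Fin N → Fin M) (m₀ : Fin M)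
    (hdiag : ∀ i, m (i, i) = m₀) (hoff : ∀ i j, i ≠ j → m (i, j) ≠ m₀) :
    ∃ Z : Set (Fin M → ℝ), IsClosed Z ∧ volume Z = 0 ∧
      ∀ h : ℝ → ℝ, (∀ x, h x ∈ Set.Icc (-1 : ℝ) 1) →
        (fun i => h (γ i)) ∉ Z →
        IsUnit (Matrix.of fun i j : Fin N => h (γ (m (i, j)))).det := by
  classical
  -- the determinant polynomial
  set P : MvPolynomial (Fin M) ℝ :=
    (Matrix.of fun i j : Fin N => MvPolynomial.X (m (i, j))).det with hP
  have hdet : ∀ v : Fin M → ℝ,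
      (Matrix.of fun i j : Fin N => v (m (i, j))).det = MvPolynomial.eval v P := by
    intro v
    rw [hP, RingHom.map_det]
    congr 1
    ext i j
    simp [RingHom.mapMatrix_apply]
  -- P is nonzero: evaluate at indicator of m₀
  have hPne : P ≠ 0 := by
    intro h0
    set v₀ : Fin M → ℝ := fun k => if k = m₀ then 1 else 0 with hv₀
    have h1 : (Matrix.of fun i j : Fin N => v₀ (m (i, j))) = (1 : Matrix (Fin N) (Fin N) ℝ) := by
      ext i j
      by_cases hij : i = j
      · subst hij
        simp [hv₀, hdiag i, Matrix.one_apply]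
      · simp [hv₀, hoff i j hij, Matrix.one_apply, hij]
    have := hdet v₀
    rw [h1, h0] at this
    simp at this
  refine ⟨{v | MvPolynomial.eval v P = 0}, ?_, ?_, ?_⟩
  · exact isClosed_eq (MvPolynomial.continuous_eval P) continuous_const
  · exact mvpoly_zero_set_volume_zero M P hPne
  · intro h _ hnot
    rw [isUnit_iff_ne_zero]
    intro hc
    exact hnot (by rw [Set.mem_setOf_eq, ← hdet (fun k => h (γ k))]; exact hc)
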